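/- arXiv:math/0702109 — 4 statements merged into one kernel-verified Lean document; each statement's English description precedes it below -/
import Mathlib

section
/- Every separable permutation π of length at least 2 can be decomposed as π = π₁ ⊕ π₂ or π = π₁ ⊖ π₂ for some nonempty separable permutations π₁ and π₂ of strictly smaller length. -/
/-- `π` occurs as a pattern in `σ`. -/
def Pattern {k n : ℕ} (π : Equiv.Perm (Fin k)) (σ : Equiv.Perm (Fin n)) : Prop :=
  ∃ f : Fin k → Fin n, StrictMono f ∧ ∀ ℓ m : Fin k, π ℓ < π m ↔ σ (f ℓ) < σ (f m)

/-- The permutation 2 4 1 3 (one-line notation; zero-indexed values 1 3 0 2). -/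
def perm2413 : Equiv.Perm (Fin 4) := c[0, 1, 3, 2]

/-- The permutation 3 1 4 2 (one-line notation; zero-indexed values 2 0 3 1). -/
def perm3142 : Equiv.Perm (Fin 4) := c[0, 2, 3, 1]

/-- A permutation is separable if it avoids both 2413 and 3142. -/
def Separable {n : ℕ} (σ : Equiv.Perm (Fin n)) : Prop :=
  ¬ Pattern perm2413 σ ∧ ¬ Pattern perm3142 σ

/-- Positive concatenation (direct sum) `π ⊕ π'`:
the word `π₁ ⋯ π_k (π'₁+k) ⋯ (π'_{k'}+k)`. -/
def dsum {k k' : ℕ} (π : Equiv.Perm (Fin k)) (π' : Equiv.Perm (Fin k')) :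
    Equiv.Perm (Fin (k + k')) :=
  finSumFinEquiv.symm.trans ((Equiv.sumCongr π π').trans finSumFinEquiv)

/-- Negative concatenation (skew sum) `π ⊖ π'`:
the word `(π₁+k') ⋯ (π_k+k') π'₁ ⋯ π'_{k'}`. -/
def ssum {k k' : ℕ} (π : Equiv.Perm (Fin k)) (π' : Equiv.Perm (Fin k')) :
    Equiv.Perm (Fin (k + k')) :=
  finSumFinEquiv.symm.trans ((Equiv.sumCongr π π').trans
    ((Equiv.sumComm (Fin k) (Fin k')).trans (finSumFinEquiv.trans (finCongr (Nat.add_comm k' k)))))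

/-- `π` has an occurrence in `σ` using the (1-indexed) interval `[i..j]` of indices and
`[a..b]` of values. -/
def OccursIn {k n : ℕ} (π : Equiv.Perm (Fin k)) (σ : Equiv.Perm (Fin n))
    (i j a b : ℕ) : Prop :=
  ∃ f : Fin k → Fin n, StrictMono f ∧
    (∀ ℓ m : Fin k, π ℓ < π m ↔ σ (f ℓ) < σ (f m)) ∧
    (∀ ℓ : Fin k, i ≤ (f ℓ : ℕ) + 1 ∧ (f ℓ : ℕ) + 1 ≤ j) ∧
    (∀ ℓ : Fin k, a ≤ (σ (f ℓ) : ℕ) + 1 ∧ (σ (f ℓ) : ℕ) + 1 ≤ b)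

/-! ### Auxiliary material -/

lemma sep_transfer {m n : ℕ} {σ : Equiv.Perm (Fin m)} {π : Equiv.Perm (Fin n)}
    (g : Fin m → Fin n) (hg : StrictMono g)
    (hc : ∀ x y : Fin m, σ x < σ y ↔ π (g x) < π (g y))
    (h : Separable π) : Separable σ := by
  constructor
  · rintro ⟨f, hf, hp⟩
    exact h.1 ⟨g ∘ f, hg.comp hf, fun ℓ m' => ((hp ℓ m').trans (hc _ _))⟩
  · rintro ⟨f, hf, hp⟩
    exact h.2 ⟨g ∘ f, hg.comp hf, fun ℓ m' => ((hp ℓ m').trans (hc _ _))⟩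

def compl' {n : ℕ} (π : Equiv.Perm (Fin n)) : Equiv.Perm (Fin n) := π.trans Fin.revPerm

lemma compl'_apply {n : ℕ} (π : Equiv.Perm (Fin n)) (x : Fin n) : compl' π x = (π x).rev := rfl

lemma sep_compl {n : ℕ} {π : Equiv.Perm (Fin n)} (h : Separable π) : Separable (compl' π) := by
  have key : ∀ a b : Fin 4, (perm2413 a < perm2413 b ↔ perm3142 b < perm3142 a)
      ∧ (perm3142 a < perm3142 b ↔ perm2413 b < perm2413 a) := by decide
  constructor
  · rintro ⟨f, hf, hp⟩
    refine h.2 ⟨f, hf, fun ℓ m' => ?_⟩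
    rw [(key ℓ m').2, hp m' ℓ, compl'_apply, compl'_apply, Fin.rev_lt_rev]
  · rintro ⟨f, hf, hp⟩
    refine h.1 ⟨f, hf, fun ℓ m' => ?_⟩
    rw [(key ℓ m').1, hp m' ℓ, compl'_apply, compl'_apply, Fin.rev_lt_rev]

lemma find3142 {N : ℕ} (π : Equiv.Perm (Fin N)) (hsep : Separable π)
    (p0 p1 p2 p3 : Fin N) (h01 : p0 < p1) (h12 : p1 < p2) (h23 : p2 < p3)
    (hv1 : π p1 < π p3) (hv2 : π p3 < π p0) (hv3 : π p0 < π p2) : False := by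
  have h01' : (p0:ℕ) < p1 := h01
  have h12' : (p1:ℕ) < p2 := h12
  have h23' : (p2:ℕ) < p3 := h23
  have a1 : (π p1 : ℕ) < π p3 := hv1
  have a2 : (π p3 : ℕ) < π p0 := hv2
  have a3 : (π p0 : ℕ) < π p2 := hv3
  apply hsep.2
  refine ⟨![p0, p1, p2, p3], ?_, ?_⟩
  · intro a b hab
    have hab' : (a:ℕ) < b := hab
    fin_cases a <;> fin_cases b <;> simp_all <;> rw [Fin.lt_def] <;> omega
  · have e0 : perm3142 0 = 2 := by decide
    have e1 : perm3142 1 = 0 := by decide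
    have e2 : perm3142 2 = 3 := by decide
    have e3 : perm3142 3 = 1 := by decide
    intro ℓ m'
    fin_cases ℓ <;> fin_cases m' <;>
      simp only [Matrix.cons_val_zero, Matrix.cons_val_one, Matrix.head_cons,
        Matrix.cons_val_two, Matrix.tail_cons, Matrix.cons_val_three, e0, e1, e2, e3] <;>
      rw [Fin.lt_def, Fin.lt_def] <;> simp <;> omega

section Del
variable {n : ℕ} (π : Equiv.Perm (Fin (n+1)))

private def dfun (x : Fin n) : Fin n :=
  if h : (π x.castSucc : ℕ) < (π (Fin.last n) : ℕ) then
    ⟨(π x.castSucc : ℕ), by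
      have h1 : (π (Fin.last n) : ℕ) < n + 1 := (π (Fin.last n)).isLt
      omega⟩
  else
    ⟨(π x.castSucc : ℕ) - 1, by
      have h1 : (π x.castSucc : ℕ) < n + 1 := (π x.castSucc).isLt
      have h2 : (π x.castSucc : ℕ) ≠ (π (Fin.last n) : ℕ) := by
        intro h
        exact absurd (π.injective (Fin.ext h)) (Fin.ne_of_lt (Fin.castSucc_lt_last x))
      omega⟩

lemma dfun_lt_iff (x y : Fin n) : dfun π x < dfun π y ↔ π x.castSucc < π y.castSucc := by
  have hx : (π x.castSucc : ℕ) ≠ (π (Fin.last n) : ℕ) := by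
    intro h
    exact absurd (π.injective (Fin.ext h)) (Fin.ne_of_lt (Fin.castSucc_lt_last x))
  have hy : (π y.castSucc : ℕ) ≠ (π (Fin.last n) : ℕ) := by
    intro h
    exact absurd (π.injective (Fin.ext h)) (Fin.ne_of_lt (Fin.castSucc_lt_last y))
  rw [Fin.lt_def, Fin.lt_def]
  unfold dfun
  split_ifs <;> simp only [] <;> omega

noncomputable def delLast : Equiv.Perm (Fin n) :=
  Equiv.ofBijective (dfun π) (Finite.injective_iff_bijective.mp (by
    intro x y hxy
    have h1 : ¬ π x.castSucc < π y.castSucc := fun hl =>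
      absurd ((dfun_lt_iff π x y).mpr hl) (by rw [hxy]; exact lt_irrefl _)
    have h2 : ¬ π y.castSucc < π x.castSucc := fun hl =>
      absurd ((dfun_lt_iff π y x).mpr hl) (by rw [hxy]; exact lt_irrefl _)
    exact Fin.castSucc_injective n (π.injective (le_antisymm (not_lt.mp h2) (not_lt.mp h1)))))

lemma delLast_lt_iff (x y : Fin n) : delLast π x < delLast π y ↔ π x.castSucc < π y.castSucc :=
  dfun_lt_iff π x y
end Del

section Block
variable {n : ℕ}

def bpos (a s : ℕ) (hpos : a + s ≤ n) (x : Fin s) : Fin n :=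
  ⟨a + (x:ℕ), by omega⟩

lemma bpos_val (a s : ℕ) (hpos : a + s ≤ n) (x : Fin s) :
    (bpos a s hpos x : ℕ) = a + (x:ℕ) := rfl

variable (π : Equiv.Perm (Fin n))

noncomputable def blockPerm (a b s : ℕ) (hpos : a + s ≤ n)
    (hval : ∀ x : Fin s, b ≤ (π (bpos a s hpos x) : ℕ) ∧ (π (bpos a s hpos x) : ℕ) < b + s) :
    Equiv.Perm (Fin s) :=
  Equiv.ofBijective (fun x => ⟨(π (bpos a s hpos x) : ℕ) - b, by have := hval x; omega⟩)
    (Finite.injective_iff_bijective.mp (by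
      intro x y hxy
      have h1 := hval x
      have h2 := hval y
      have h3 : (π (bpos a s hpos x) : ℕ) = (π (bpos a s hpos y) : ℕ) := by
        have := congrArg Fin.val hxy
        simp only [] at this
        omega
      have h4 := congrArg Fin.val (π.injective (Fin.ext h3))
      rw [bpos_val, bpos_val] at h4
      exact Fin.ext (by omega)))

lemma blockPerm_val (a b s : ℕ) (hpos : a + s ≤ n) (hval) (x : Fin s) :
    (blockPerm π a b s hpos hval x : ℕ) = (π (bpos a s hpos x) : ℕ) - b := rfl

lemma blockPerm_sep (a b s : ℕ) (hpos : a + s ≤ n) (hval) (hsep : Separable π) :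
    Separable (blockPerm π a b s hpos hval) := by
  refine sep_transfer (bpos a s hpos) ?_ ?_ hsep
  · intro x y hxy
    have hxy' : (x:ℕ) < y := hxy
    rw [Fin.lt_def, bpos_val, bpos_val]
    omega
  · intro x y
    have h1 := hval x
    have h2 := hval y
    rw [Fin.lt_def, Fin.lt_def, blockPerm_val, blockPerm_val]
    omega
end Block

section SumLemmas
variable {k k' : ℕ} (π₁ : Equiv.Perm (Fin k)) (π₂ : Equiv.Perm (Fin k'))

lemma dsum_castAdd (x : Fin k) :
    dsum π₁ π₂ (Fin.castAdd k' x) = Fin.castAdd k' (π₁ x) := by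
  simp [dsum]

lemma dsum_natAdd (x : Fin k') :
    dsum π₁ π₂ (Fin.natAdd k x) = Fin.natAdd k (π₂ x) := by
  simp [dsum]

lemma ssum_castAdd (x : Fin k) :
    (ssum π₁ π₂ (Fin.castAdd k' x) : ℕ) = k' + (π₁ x : ℕ) := by
  simp [ssum]
  omega

lemma ssum_natAdd (x : Fin k') :
    (ssum π₁ π₂ (Fin.natAdd k x) : ℕ) = (π₂ x : ℕ) := by
  simp [ssum]
end SumLemmas

def SumSplitAt {n : ℕ} (π : Equiv.Perm (Fin n)) (m : ℕ) : Prop :=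
  ∀ i j : Fin n, (i:ℕ) < m → m ≤ (j:ℕ) → π i < π j

def SkewSplitAt {n : ℕ} (π : Equiv.Perm (Fin n)) (m : ℕ) : Prop :=
  ∀ i j : Fin n, (i:ℕ) < m → m ≤ (j:ℕ) → π j < π i

def HasSplit {n : ℕ} (π : Equiv.Perm (Fin n)) : Prop :=
  ∃ m, 0 < m ∧ m < n ∧ (SumSplitAt π m ∨ SkewSplitAt π m)

lemma hasSplit_of_compl {n : ℕ} (π : Equiv.Perm (Fin n)) (h : HasSplit (compl' π)) :
    HasSplit π := by
  obtain ⟨m, h0, h1, hc | hc⟩ := h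
  · refine ⟨m, h0, h1, Or.inr fun i j hi hj => ?_⟩
    have := hc i j hi hj
    rwa [compl'_apply, compl'_apply, Fin.rev_lt_rev] at this
  · refine ⟨m, h0, h1, Or.inl fun i j hi hj => ?_⟩
    have := hc i j hi hj
    rwa [compl'_apply, compl'_apply, Fin.rev_lt_rev] at this

lemma step {k m : ℕ} (π : Equiv.Perm (Fin (k+1))) (hsep : Separable π)
    (hm0 : 0 < m) (hmk : m < k)
    (hA : ∀ i j : Fin (k+1), (i:ℕ) < m → m ≤ (j:ℕ) → (j:ℕ) < k → π i < π j) :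
    HasSplit π := by
  set v := π (Fin.last k) with hv
  have hlastval : ((Fin.last k : Fin (k+1)) : ℕ) = k := rfl
  have hne : ∀ i : Fin (k+1), (i:ℕ) < k → π i ≠ v := by
    intro i hik heq
    have h1 := congrArg Fin.val (π.injective heq)
    rw [hlastval] at h1
    omega
  by_cases hc1 : ∀ i : Fin (k+1), (i:ℕ) < m → π i < v
  · refine ⟨m, hm0, by omega, Or.inl ?_⟩
    intro i j hi hj
    rcases Nat.lt_or_ge (j:ℕ) k with hjk | hjk
    · exact hA i j hi hj hjk
    · have hj' : j = Fin.last k := Fin.ext (by rw [hlastval]; have := j.isLt; omega)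
      rw [hj']
      exact hc1 i hi
  · push_neg at hc1
    obtain ⟨i₀, hi₀m, hi₀v⟩ := hc1
    have hi₀v' : v < π i₀ := lt_of_le_of_ne hi₀v (Ne.symm (hne i₀ (by omega)))
    by_cases hc2 : ∀ i : Fin (k+1), (i:ℕ) < m → v < π i
    · refine ⟨k, by omega, by omega, Or.inr ?_⟩
      intro i j hi hj
      have hj' : j = Fin.last k := Fin.ext (by rw [hlastval]; have := j.isLt; omega)
      rw [hj']
      rcases Nat.lt_or_ge (i:ℕ) m with him | him
      · exact hc2 i him
      · exact lt_trans hi₀v' (hA i₀ i hi₀m him hi)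
    · push_neg at hc2
      obtain ⟨i₁, hi₁m, hi₁v⟩ := hc2
      have hi₁v' : π i₁ < v := lt_of_le_of_ne hi₁v (hne i₁ (by omega))
      have key : ∀ a b : Fin (k+1), (a:ℕ) < m → (b:ℕ) < m → v < π a → π b < v →
          ¬ a < b := by
        intro a b ham hbm hva hbv hab
        have hmlt : ((⟨m, by omega⟩ : Fin (k+1)) : ℕ) = m := rfl
        refine find3142 π hsep a b ⟨m, by omega⟩ (Fin.last k) hab
          (Fin.lt_def.mpr (by rw [hmlt]; exact hbm))
          (Fin.lt_def.mpr (by rw [hmlt, hlastval]; omega))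
          hbv hva ?_
        exact hA a ⟨m, by omega⟩ ham (by rw [hmlt]) (by rw [hmlt]; omega)
      set T := Finset.univ.filter (fun i : Fin (k+1) => (i:ℕ) < m ∧ π i < v) with hT
      have hi₁T : i₁ ∈ T := by
        simp only [hT, Finset.mem_filter, Finset.mem_univ, true_and]
        exact ⟨hi₁m, hi₁v'⟩
      have hTne : T.Nonempty := ⟨i₁, hi₁T⟩
      set i' := T.max' hTne with hi'
      have hi'T : i' ∈ T := T.max'_mem hTne
      have hi'm : (i':ℕ) < m ∧ π i' < v := by
        simpa only [hT, Finset.mem_filter, Finset.mem_univ, true_and] using hi'T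
      refine ⟨(i':ℕ) + 1, by omega, by have := hi'm.1; omega, Or.inl ?_⟩
      have low : ∀ i : Fin (k+1), (i:ℕ) < (i':ℕ) + 1 → π i < v := by
        intro i hi
        rcases eq_or_lt_of_le (Nat.lt_succ_iff.mp hi) with heq | hlt
        · have : i = i' := Fin.ext heq
          rw [this]; exact hi'm.2
        · by_contra hnl
          push_neg at hnl
          have hvp : v < π i := lt_of_le_of_ne hnl
            (Ne.symm (hne i (by have := hi'm.1; omega)))
          exact key i i' (by have := hi'm.1; omega) hi'm.1 hvp hi'm.2 (Fin.lt_def.mpr hlt)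
      intro i j hi hj
      have hiv := low i hi
      have him : (i:ℕ) < m := by have := hi'm.1; omega
      rcases Nat.lt_or_ge (j:ℕ) m with hjm | hjm
      · have hvj : v < π j := by
          by_contra hnl
          push_neg at hnl
          have hjv : π j < v := lt_of_le_of_ne hnl (hne j (by omega))
          have hjT : j ∈ T := by
            simp only [hT, Finset.mem_filter, Finset.mem_univ, true_and]
            exact ⟨hjm, hjv⟩
          have hle : (j:ℕ) ≤ (i':ℕ) := T.le_max' j hjT
          omega
        exact lt_trans hiv hvj
      · rcases Nat.lt_or_ge (j:ℕ) k with hjk | hjk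
        · exact hA i j him hjm hjk
        · have hj' : j = Fin.last k := Fin.ext (by rw [hlastval]; have := j.isLt; omega)
          rw [hj']
          exact hiv

lemma core : ∀ n : ℕ, 2 ≤ n → ∀ π : Equiv.Perm (Fin n), Separable π → HasSplit π := by
  intro n
  induction n with
  | zero => intro h; omega
  | succ k ih =>
    intro hn π hsep
    rcases Nat.lt_or_ge k 2 with hk | hk
    · have hk1 : k = 1 := by omega
      subst hk1
      refine ⟨1, one_pos, one_lt_two, ?_⟩
      have h01 : (0 : Fin 2) ≠ 1 := by decide
      have hne : π 0 ≠ π 1 := fun h => h01 (π.injective h)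
      have hfix : ∀ i : Fin 2, (i:ℕ) < 1 → i = 0 := by decide
      have hfix2 : ∀ j : Fin 2, 1 ≤ (j:ℕ) → j = 1 := by decide
      rcases hne.lt_or_gt with hl | hl
      · exact Or.inl (fun i j hi hj => by rw [hfix i hi, hfix2 j hj]; exact hl)
      · exact Or.inr (fun i j hi hj => by rw [hfix i hi, hfix2 j hj]; exact hl)
    · have hτsep : Separable (delLast π) := sep_transfer Fin.castSucc Fin.strictMono_castSucc
        (delLast_lt_iff π) hsep
      obtain ⟨m, hm0, hmk, hsp⟩ := ih hk (delLast π) hτsep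
      rcases hsp with hs | hs
      · apply step π hsep hm0 hmk
        intro i j hi hj hjk
        have hik : (i:ℕ) < k := by omega
        have ei : i = Fin.castSucc ⟨(i:ℕ), hik⟩ := Fin.ext rfl
        have ej : j = Fin.castSucc ⟨(j:ℕ), hjk⟩ := Fin.ext rfl
        rw [ei, ej]
        exact (delLast_lt_iff π _ _).mp (hs ⟨(i:ℕ), hik⟩ ⟨(j:ℕ), hjk⟩ hi hj)
      · apply hasSplit_of_compl
        apply step (compl' π) (sep_compl hsep) hm0 hmk
        intro i j hi hj hjk
        have hik : (i:ℕ) < k := by omega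
        have ei : i = Fin.castSucc ⟨(i:ℕ), hik⟩ := Fin.ext rfl
        have ej : j = Fin.castSucc ⟨(j:ℕ), hjk⟩ := Fin.ext rfl
        rw [compl'_apply, compl'_apply, Fin.rev_lt_rev, ei, ej]
        exact (delLast_lt_iff π _ _).mp (hs ⟨(i:ℕ), hik⟩ ⟨(j:ℕ), hjk⟩ hi hj)

lemma sumSplit_val {n m : ℕ} (π : Equiv.Perm (Fin n)) (hmn : m < n)
    (h : ∀ i j : Fin n, (i:ℕ) < m → m ≤ (j:ℕ) → π i < π j) (i : Fin n) :
    ((i:ℕ) < m ↔ (π i : ℕ) < m) := by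
  have hval : ((⟨m, hmn⟩ : Fin n) : ℕ) = m := rfl
  constructor
  · intro hi
    by_contra hpi
    push_neg at hpi
    have hmaps : ∀ a ∈ insert i (Finset.Ici (⟨m, hmn⟩ : Fin n)),
        π a ∈ Finset.Ici (⟨m, hmn⟩ : Fin n) := by
      intro a ha
      rcases Finset.mem_insert.mp ha with rfl | ha
      · exact Finset.mem_Ici.mpr (by rw [Fin.le_def, hval]; exact hpi)
      · have ha' : (⟨m, hmn⟩ : Fin n) ≤ a := Finset.mem_Ici.mp ha
        have ha'' : m ≤ (a : ℕ) := ha'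
        have h2 : (π i : ℕ) < π a := h i a hi ha''
        exact Finset.mem_Ici.mpr (by rw [Fin.le_def, hval]; omega)
    have hcard := Finset.card_le_card_of_injOn π hmaps (π.injective.injOn)
    rw [Finset.card_insert_of_notMem
      (by simp only [Finset.mem_Ici, Fin.le_def, hval, not_le]; exact hi)] at hcard
    omega
  · intro hpi
    by_contra hi
    push_neg at hi
    have hmaps : ∀ a ∈ insert i (Finset.Iio (⟨m, hmn⟩ : Fin n)),
        π a ∈ Finset.Iio (⟨m, hmn⟩ : Fin n) := by
      intro a ha
      rcases Finset.mem_insert.mp ha with rfl | ha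
      · exact Finset.mem_Iio.mpr (by rw [Fin.lt_def, hval]; exact hpi)
      · have ha' : a < (⟨m, hmn⟩ : Fin n) := Finset.mem_Iio.mp ha
        have ha'' : (a : ℕ) < m := ha'
        have h2 : (π a : ℕ) < π i := h a i ha'' hi
        exact Finset.mem_Iio.mpr (by rw [Fin.lt_def, hval]; omega)
    have hcard := Finset.card_le_card_of_injOn π hmaps (π.injective.injOn)
    rw [Finset.card_insert_of_notMem
      (by simp only [Finset.mem_Iio, Fin.lt_def, hval, not_lt]; exact hi)] at hcard
    omega

lemma skewSplit_val {n m : ℕ} (π : Equiv.Perm (Fin n)) (hm0 : 0 < m) (hmn : m < n)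
    (h : ∀ i j : Fin n, (i:ℕ) < m → m ≤ (j:ℕ) → π j < π i) (i : Fin n) :
    ((i:ℕ) < m ↔ n - m ≤ (π i : ℕ)) := by
  have hsn : n - m < n := by omega
  have hval : ((⟨m, hmn⟩ : Fin n) : ℕ) = m := rfl
  have hsval : ((⟨n - m, hsn⟩ : Fin n) : ℕ) = n - m := rfl
  constructor
  · intro hi
    by_contra hpi
    push_neg at hpi
    have hmaps : ∀ a ∈ insert i (Finset.Ici (⟨m, hmn⟩ : Fin n)),
        π a ∈ Finset.Iio (⟨n - m, hsn⟩ : Fin n) := by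
      intro a ha
      rcases Finset.mem_insert.mp ha with rfl | ha
      · exact Finset.mem_Iio.mpr (by rw [Fin.lt_def, hsval]; exact hpi)
      · have ha' : (⟨m, hmn⟩ : Fin n) ≤ a := Finset.mem_Ici.mp ha
        have ha'' : m ≤ (a : ℕ) := ha'
        have h2 : (π a : ℕ) < π i := h i a hi ha''
        exact Finset.mem_Iio.mpr (by rw [Fin.lt_def, hsval]; omega)
    have hcard := Finset.card_le_card_of_injOn π hmaps (π.injective.injOn)
    rw [Finset.card_insert_of_notMem
      (by simp only [Finset.mem_Ici, Fin.le_def, hval, not_le]; exact hi)] at hcard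
    rw [Fin.card_Ici, Fin.card_Iio, hval, hsval] at hcard
    omega
  · intro hpi
    by_contra hi
    push_neg at hi
    have hmaps : ∀ a ∈ insert i (Finset.Iio (⟨m, hmn⟩ : Fin n)),
        π a ∈ Finset.Ici (⟨n - m, hsn⟩ : Fin n) := by
      intro a ha
      rcases Finset.mem_insert.mp ha with rfl | ha
      · exact Finset.mem_Ici.mpr (by rw [Fin.le_def, hsval]; exact hpi)
      · have ha' : a < (⟨m, hmn⟩ : Fin n) := Finset.mem_Iio.mp ha
        have ha'' : (a : ℕ) < m := ha'
        have h2 : (π i : ℕ) < π a := h a i ha'' hi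
        exact Finset.mem_Ici.mpr (by rw [Fin.le_def, hsval]; omega)
    have hcard := Finset.card_le_card_of_injOn π hmaps (π.injective.injOn)
    rw [Finset.card_insert_of_notMem
      (by simp only [Finset.mem_Iio, Fin.lt_def, hval, not_lt]; exact hi)] at hcard
    rw [Fin.card_Iio, Fin.card_Ici, hval, hsval] at hcard
    omega

/-- Every separable permutation of length at least `2` decomposes as a positive or negative
concatenation of two nonempty separable permutations of strictly smaller length. -/
theorem separable_decomposition {n : ℕ} (hn : 2 ≤ n) (π : Equiv.Perm (Fin n))
    (hπ : Separable π) :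
    ∃ (k₁ k₂ : ℕ) (π₁ : Equiv.Perm (Fin k₁)) (π₂ : Equiv.Perm (Fin k₂)) (h : k₁ + k₂ = n),
      0 < k₁ ∧ 0 < k₂ ∧ k₁ < n ∧ k₂ < n ∧ Separable π₁ ∧ Separable π₂ ∧
      ((finCongr h).permCongr (dsum π₁ π₂) = π ∨ (finCongr h).permCongr (ssum π₁ π₂) = π) := by
  obtain ⟨m, hm0, hmn, hsp | hsp⟩ := core n hn π hπ
  · -- sum case
    have hiff := sumSplit_val π hmn hsp
    have h' : m + (n - m) = n := by omega
    have hp1 : 0 + m ≤ n := by omega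
    have hp2 : m + (n - m) ≤ n := by omega
    have hv1 : ∀ x : Fin m, 0 ≤ (π (bpos 0 m hp1 x) : ℕ) ∧ (π (bpos 0 m hp1 x) : ℕ) < 0 + m := by
      intro x
      refine ⟨Nat.zero_le _, ?_⟩
      have hb : ((bpos 0 m hp1 x : Fin n) : ℕ) = 0 + (x:ℕ) := bpos_val 0 m hp1 x
      have := (hiff (bpos 0 m hp1 x)).mp (by rw [hb]; have := x.isLt; omega)
      omega
    have hv2 : ∀ x : Fin (n - m), m ≤ (π (bpos m (n - m) hp2 x) : ℕ) ∧
        (π (bpos m (n - m) hp2 x) : ℕ) < m + (n - m) := by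
      intro x
      have hb : ((bpos m (n - m) hp2 x : Fin n) : ℕ) = m + (x:ℕ) := bpos_val m (n - m) hp2 x
      constructor
      · by_contra hlt
        push_neg at hlt
        have := (hiff (bpos m (n - m) hp2 x)).mpr hlt
        rw [hb] at this
        omega
      · have := (π (bpos m (n - m) hp2 x)).isLt
        omega
    refine ⟨m, n - m, blockPerm π 0 0 m hp1 hv1, blockPerm π m m (n - m) hp2 hv2, h',
      hm0, by omega, hmn, by omega,
      blockPerm_sep π 0 0 m hp1 hv1 hπ, blockPerm_sep π m m (n - m) hp2 hv2 hπ, Or.inl ?_⟩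
    apply Equiv.ext
    intro x
    rw [Equiv.permCongr_apply]
    apply Fin.ext
    rcases Nat.lt_or_ge (x:ℕ) m with hx | hx
    · have hy : (finCongr h').symm x = Fin.castAdd (n - m) ⟨(x:ℕ), hx⟩ := by
        apply Fin.ext; simp
      rw [hy, dsum_castAdd]
      simp only [finCongr_apply, Fin.coe_cast, Fin.coe_castAdd]
      rw [blockPerm_val]
      have hb : bpos 0 m hp1 ⟨(x:ℕ), hx⟩ = x := Fin.ext (by simp only [bpos] <;> omega)
      rw [hb]
      omega
    · have hy : (finCongr h').symm x = Fin.natAdd m ⟨(x:ℕ) - m, by have := x.isLt; omega⟩ := by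
        apply Fin.ext; simp; omega
      rw [hy, dsum_natAdd]
      simp only [finCongr_apply, Fin.coe_cast, Fin.coe_natAdd]
      rw [blockPerm_val]
      have hb : bpos m (n - m) hp2 ⟨(x:ℕ) - m, by have := x.isLt; omega⟩ = x :=
        Fin.ext (by simp only [bpos] <;> omega)
      rw [hb]
      have hge : m ≤ (π x : ℕ) := by
        by_contra hlt
        push_neg at hlt
        have := (hiff x).mpr hlt
        omega
      omega
  · -- skew case
    have hiff := skewSplit_val π hm0 hmn hsp
    have h' : m + (n - m) = n := by omega
    have hp1 : 0 + m ≤ n := by omega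
    have hp2 : m + (n - m) ≤ n := by omega
    have hv1 : ∀ x : Fin m, (n - m) ≤ (π (bpos 0 m hp1 x) : ℕ) ∧
        (π (bpos 0 m hp1 x) : ℕ) < (n - m) + m := by
      intro x
      have hb : ((bpos 0 m hp1 x : Fin n) : ℕ) = 0 + (x:ℕ) := bpos_val 0 m hp1 x
      constructor
      · exact (hiff (bpos 0 m hp1 x)).mp (by rw [hb]; have := x.isLt; omega)
      · have := (π (bpos 0 m hp1 x)).isLt
        omega
    have hv2 : ∀ x : Fin (n - m), 0 ≤ (π (bpos m (n - m) hp2 x) : ℕ) ∧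
        (π (bpos m (n - m) hp2 x) : ℕ) < 0 + (n - m) := by
      intro x
      have hb : ((bpos m (n - m) hp2 x : Fin n) : ℕ) = m + (x:ℕ) := bpos_val m (n - m) hp2 x
      refine ⟨Nat.zero_le _, ?_⟩
      by_contra hge
      push_neg at hge
      have := (hiff (bpos m (n - m) hp2 x)).mpr (by omega)
      rw [hb] at this
      omega
    refine ⟨m, n - m, blockPerm π 0 (n - m) m hp1 hv1, blockPerm π m 0 (n - m) hp2 hv2, h',
      hm0, by omega, hmn, by omega,
      blockPerm_sep π 0 (n - m) m hp1 hv1 hπ, blockPerm_sep π m 0 (n - m) hp2 hv2 hπ, Or.inr ?_⟩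
    apply Equiv.ext
    intro x
    rw [Equiv.permCongr_apply]
    apply Fin.ext
    rcases Nat.lt_or_ge (x:ℕ) m with hx | hx
    · have hy : (finCongr h').symm x = Fin.castAdd (n - m) ⟨(x:ℕ), hx⟩ := by
        apply Fin.ext; simp
      rw [hy]
      simp only [finCongr_apply, Fin.coe_cast]
      rw [ssum_castAdd]
      rw [blockPerm_val]
      have hb : bpos 0 m hp1 ⟨(x:ℕ), hx⟩ = x := Fin.ext (by simp only [bpos] <;> omega)
      rw [hb]
      have := hv1 ⟨(x:ℕ), hx⟩
      rw [hb] at this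
      omega
    · have hy : (finCongr h').symm x = Fin.natAdd m ⟨(x:ℕ) - m, by have := x.isLt; omega⟩ := by
        apply Fin.ext; simp; omega
      rw [hy]
      simp only [finCongr_apply, Fin.coe_cast]
      rw [ssum_natAdd]
      rw [blockPerm_val]
      have hb : bpos m (n - m) hp2 ⟨(x:ℕ) - m, by have := x.isLt; omega⟩ = x :=
        Fin.ext (by simp only [bpos] <;> omega)
      rw [hb]
      omega
end

section
/- Let σ¹,…,σ^K be permutations, and for each q ∈ [1..K] let [i_q..j_q] and [a_q..b_q] be intervals of indices and values. Let π be a separable permutation of maximal length among all separable permutations that have, for every q, an occurrence in σ^q in the interval [i_q..j_q] of indices and [a_q..b_q] of values. Suppose π = π₁ ⊖ π₂ with π₁, π₂ nonempty separable permutations. Then there exist, for each q, indices h_q with i_q < h_q ≤ j_q and values c_q with a_q < c_q ≤ b_q such that: (i) π₁ is of maximal length among separable permutations having, for every q, an occurrence in σ^q in the interval [i_q..h_q−1] of indices and [c_q..b_q] of values; and (ii) π₂ is of maximal length among separable permutations having, for every q, an occurrence in σ^q in the interval [h_q..j_q] of indices and [a_q..c_q−1] of values. -/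
section aux

private lemma ssum_val_left {k₁ k₂ : ℕ} (π₁ : Equiv.Perm (Fin k₁)) (π₂ : Equiv.Perm (Fin k₂))
    (x : Fin (k₁ + k₂)) (hx : (x : ℕ) < k₁) :
    (ssum π₁ π₂ x : ℕ) = k₂ + (π₁ ⟨x, hx⟩ : ℕ) := by
  have h1 : finSumFinEquiv.symm x = Sum.inl (⟨x, hx⟩ : Fin k₁) := by
    rw [Equiv.symm_apply_eq]; ext; simp
  simp [ssum, h1, Nat.add_comm]

private lemma ssum_val_right {k₁ k₂ : ℕ} (π₁ : Equiv.Perm (Fin k₁)) (π₂ : Equiv.Perm (Fin k₂))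
    (x : Fin (k₁ + k₂)) (hx : k₁ ≤ (x : ℕ)) :
    (ssum π₁ π₂ x : ℕ) = (π₂ ⟨(x : ℕ) - k₁, by omega⟩ : ℕ) := by
  have h1 : finSumFinEquiv.symm x = Sum.inr (⟨(x:ℕ) - k₁, by omega⟩ : Fin k₂) := by
    rw [Equiv.symm_apply_eq]; ext; simp; omega
  simp [ssum, h1]

private lemma ssum_cross {k₁ k₂ : ℕ} (π₁ : Equiv.Perm (Fin k₁)) (π₂ : Equiv.Perm (Fin k₂))
    (x y : Fin (k₁ + k₂)) (hx : (x : ℕ) < k₁) (hy : k₁ ≤ (y : ℕ)) :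
    ssum π₁ π₂ y < ssum π₁ π₂ x := by
  rw [Fin.lt_def, ssum_val_left π₁ π₂ x hx, ssum_val_right π₁ π₂ y hy]
  have := (π₂ (⟨(y:ℕ) - k₁, by omega⟩ : Fin k₂)).isLt
  omega

private lemma pattern_of_all_left {k k₁ k₂ : ℕ} {τ : Equiv.Perm (Fin k)}
    {π₁ : Equiv.Perm (Fin k₁)} {π₂ : Equiv.Perm (Fin k₂)}
    {f : Fin k → Fin (k₁ + k₂)} (hm : StrictMono f)
    (hv : ∀ ℓ m, τ ℓ < τ m ↔ ssum π₁ π₂ (f ℓ) < ssum π₁ π₂ (f m))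
    (hall : ∀ ℓ, (f ℓ : ℕ) < k₁) : Pattern τ π₁ := by
  refine ⟨fun ℓ => ⟨f ℓ, hall ℓ⟩, ?_, ?_⟩
  · intro x y hxy
    have : f x < f y := hm hxy
    rw [Fin.lt_def] at this ⊢
    exact this
  · intro ℓ m
    dsimp only
    rw [hv ℓ m]
    rw [Fin.lt_def, Fin.lt_def, ssum_val_left π₁ π₂ _ (hall ℓ), ssum_val_left π₁ π₂ _ (hall m)]
    omega

private lemma pattern_of_all_right {k k₁ k₂ : ℕ} {τ : Equiv.Perm (Fin k)}
    {π₁ : Equiv.Perm (Fin k₁)} {π₂ : Equiv.Perm (Fin k₂)}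
    {f : Fin k → Fin (k₁ + k₂)} (hm : StrictMono f)
    (hv : ∀ ℓ m, τ ℓ < τ m ↔ ssum π₁ π₂ (f ℓ) < ssum π₁ π₂ (f m))
    (hall : ∀ ℓ, k₁ ≤ (f ℓ : ℕ)) : Pattern τ π₂ := by
  refine ⟨fun ℓ => ⟨(f ℓ : ℕ) - k₁, by have h1 := (f ℓ).isLt; have h2 := hall ℓ; omega⟩, ?_, ?_⟩
  · intro x y hxy
    have : f x < f y := hm hxy
    rw [Fin.lt_def] at this ⊢
    have := hall x
    simp only []
    omega
  · intro ℓ m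
    dsimp only
    rw [hv ℓ m]
    rw [Fin.lt_def, Fin.lt_def, ssum_val_right π₁ π₂ _ (hall ℓ), ssum_val_right π₁ π₂ _ (hall m)]

private lemma sep_ssum {k₁ k₂ : ℕ} {π₁ : Equiv.Perm (Fin k₁)} {π₂ : Equiv.Perm (Fin k₂)}
    (h₁ : Separable π₁) (h₂ : Separable π₂) : Separable (ssum π₁ π₂) := by
  constructor
  · rintro ⟨f, hm, hv⟩
    by_cases hL : (f 3 : ℕ) < k₁
    · refine h₁.1 (pattern_of_all_left hm hv ?_)
      intro ℓ
      have h3 : f ℓ ≤ f 3 := hm.monotone (Fin.le_last ℓ)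
      rw [Fin.le_def] at h3; omega
    · by_cases hR : k₁ ≤ (f 0 : ℕ)
      · refine h₂.1 (pattern_of_all_right hm hv ?_)
        intro ℓ
        have h0 : f 0 ≤ f ℓ := hm.monotone (Fin.zero_le ℓ)
        rw [Fin.le_def] at h0; omega
      · have h03 : ssum π₁ π₂ (f 0) < ssum π₁ π₂ (f 3) := (hv 0 3).mp (by decide)
        exact lt_asymm (ssum_cross π₁ π₂ (f 0) (f 3) (by omega) (by omega)) h03
  · rintro ⟨f, hm, hv⟩
    by_cases hL : (f 3 : ℕ) < k₁
    · refine h₁.2 (pattern_of_all_left hm hv ?_)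
      intro ℓ
      have h3 : f ℓ ≤ f 3 := hm.monotone (Fin.le_last ℓ)
      rw [Fin.le_def] at h3; omega
    · by_cases hR : k₁ ≤ (f 0 : ℕ)
      · refine h₂.2 (pattern_of_all_right hm hv ?_)
        intro ℓ
        have h0 : f 0 ≤ f ℓ := hm.monotone (Fin.zero_le ℓ)
        rw [Fin.le_def] at h0; omega
      · by_cases h1 : (f 1 : ℕ) < k₁
        · have h13 : ssum π₁ π₂ (f 1) < ssum π₁ π₂ (f 3) := (hv 1 3).mp (by decide)
          exact lt_asymm (ssum_cross π₁ π₂ (f 1) (f 3) h1 (by omega)) h13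
        · have h12 : f 1 ≤ f 2 := hm.monotone (by decide)
          rw [Fin.le_def] at h12
          have h02 : ssum π₁ π₂ (f 0) < ssum π₁ π₂ (f 2) := (hv 0 2).mp (by decide)
          exact lt_asymm (ssum_cross π₁ π₂ (f 0) (f 2) (by omega) (by omega)) h02

private lemma occ_glue {p₁ p₂ n : ℕ} (τ₁ : Equiv.Perm (Fin p₁)) (τ₂ : Equiv.Perm (Fin p₂))
    (σ : Equiv.Perm (Fin n)) {i j a b h c : ℕ}
    (hi : 1 ≤ i) (ha : 1 ≤ a) (hih : i < h) (hac : a < c) (hhj : h - 1 ≤ j) (hcb : c - 1 ≤ b)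
    (o₁ : OccursIn τ₁ σ i (h - 1) c b) (o₂ : OccursIn τ₂ σ h j a (c - 1)) :
    OccursIn (ssum τ₁ τ₂) σ i j a b := by
  obtain ⟨f₁, m₁, v₁, x₁, y₁⟩ := o₁
  obtain ⟨f₂, m₂, v₂, x₂, y₂⟩ := o₂
  refine ⟨fun x => if hx : (x : ℕ) < p₁ then f₁ ⟨x, hx⟩ else
      f₂ ⟨(x : ℕ) - p₁, by have := x.isLt; omega⟩, ?_, ?_, ?_, ?_⟩
  · intro x y hxy
    have hxy' : (x : ℕ) < (y : ℕ) := hxy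
    by_cases hx : (x : ℕ) < p₁ <;> by_cases hy : (y : ℕ) < p₁ <;>
      simp only [dif_pos, dif_neg, hx, hy, dite_true, dite_false]
    · exact m₁ hxy'
    · have b1 := (x₁ ⟨(x:ℕ), hx⟩).2
      have b2 := (x₂ ⟨(y:ℕ) - p₁, by have := y.isLt; omega⟩).1
      rw [Fin.lt_def]; omega
    · exact absurd hxy' (by omega)
    · exact m₂ (by rw [Fin.lt_def]; simp only []; omega)
  · intro ℓ m
    by_cases hℓ : (ℓ : ℕ) < p₁ <;> by_cases hm' : (m : ℕ) < p₁ <;>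
      simp only [dif_pos, dif_neg, hℓ, hm', dite_true, dite_false]
    · rw [Fin.lt_def, ssum_val_left τ₁ τ₂ _ hℓ, ssum_val_left τ₁ τ₂ _ hm',
        ← v₁ ⟨(ℓ:ℕ), hℓ⟩ ⟨(m:ℕ), hm'⟩, Fin.lt_def]
      omega
    · -- ℓ left, m right : both sides false
      have hm'' : p₁ ≤ (m : ℕ) := by omega
      have hsv : (ssum τ₁ τ₂ m : ℕ) < (ssum τ₁ τ₂ ℓ : ℕ) := by
        rw [ssum_val_left τ₁ τ₂ _ hℓ, ssum_val_right τ₁ τ₂ _ hm'']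
        have := (τ₂ (⟨(m:ℕ) - p₁, by omega⟩ : Fin p₂)).isLt
        omega
      have c1 := (y₁ ⟨(ℓ:ℕ), hℓ⟩).1
      have c2 := (y₂ ⟨(m:ℕ) - p₁, by have := m.isLt; omega⟩).2
      exact iff_of_false (by rw [Fin.lt_def]; omega) (by rw [Fin.lt_def]; omega)
    · -- ℓ right, m left : both sides true
      have hℓ' : p₁ ≤ (ℓ : ℕ) := by omega
      have hsv : (ssum τ₁ τ₂ ℓ : ℕ) < (ssum τ₁ τ₂ m : ℕ) := by
        rw [ssum_val_left τ₁ τ₂ _ hm', ssum_val_right τ₁ τ₂ _ hℓ']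
        have := (τ₂ (⟨(ℓ:ℕ) - p₁, by omega⟩ : Fin p₂)).isLt
        omega
      have c1 := (y₁ ⟨(m:ℕ), hm'⟩).1
      have c2 := (y₂ ⟨(ℓ:ℕ) - p₁, by have := ℓ.isLt; omega⟩).2
      exact iff_of_true (by rw [Fin.lt_def]; omega) (by rw [Fin.lt_def]; omega)
    · have hℓ' : p₁ ≤ (ℓ : ℕ) := by omega
      have hm'' : p₁ ≤ (m : ℕ) := by omega
      rw [Fin.lt_def, ssum_val_right τ₁ τ₂ _ hℓ', ssum_val_right τ₁ τ₂ _ hm'',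
        ← Fin.lt_def]
      exact v₂ _ _
  · intro ℓ
    by_cases hℓ : (ℓ : ℕ) < p₁ <;>
      simp only [dif_pos, dif_neg, hℓ, dite_true, dite_false]
    · have := x₁ ⟨(ℓ:ℕ), hℓ⟩
      omega
    · have := x₂ ⟨(ℓ:ℕ) - p₁, by have := ℓ.isLt; omega⟩
      omega
  · intro ℓ
    by_cases hℓ : (ℓ : ℕ) < p₁ <;>
      simp only [dif_pos, dif_neg, hℓ, dite_true, dite_false]
    · have := y₁ ⟨(ℓ:ℕ), hℓ⟩
      omega
    · have := y₂ ⟨(ℓ:ℕ) - p₁, by have := ℓ.isLt; omega⟩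
      omega

end aux

set_option maxHeartbeats 1000000 in
/-- Lemma 2 (`⊖` case): if `π = π₁ ⊖ π₂` is a common separable pattern of maximal length of
`σ¹, …, σ^K` among those occurring in the intervals `[i_q..j_q]` of indices and `[a_q..b_q]`
of values, then the prescribed intervals split so that `π₁` and `π₂` are common separable
patterns of maximal length in the corresponding subintervals. -/
theorem ssum_maximal_split (K : ℕ) (n : Fin K → ℕ) (σ : ∀ q, Equiv.Perm (Fin (n q)))
    (i j a b : Fin K → ℕ)
    (hij : ∀ q, 1 ≤ i q ∧ i q ≤ j q ∧ j q ≤ n q)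
    (hab : ∀ q, 1 ≤ a q ∧ a q ≤ b q ∧ b q ≤ n q)
    {k₁ k₂ : ℕ} (hk₁ : 0 < k₁) (hk₂ : 0 < k₂)
    (π₁ : Equiv.Perm (Fin k₁)) (π₂ : Equiv.Perm (Fin k₂))
    (hs₁ : Separable π₁) (hs₂ : Separable π₂)
    (hsep : Separable (ssum π₁ π₂))
    (hocc : ∀ q, OccursIn (ssum π₁ π₂) (σ q) (i q) (j q) (a q) (b q))
    (hmax : ∀ (p : ℕ) (π' : Equiv.Perm (Fin p)), Separable π' →
      (∀ q, OccursIn π' (σ q) (i q) (j q) (a q) (b q)) → p ≤ k₁ + k₂) :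
    ∃ h c : Fin K → ℕ,
      (∀ q, i q < h q ∧ h q ≤ j q ∧ a q < c q ∧ c q ≤ b q) ∧
      (∀ q, OccursIn π₁ (σ q) (i q) (h q - 1) (c q) (b q)) ∧
      (∀ (p : ℕ) (π' : Equiv.Perm (Fin p)), Separable π' →
        (∀ q, OccursIn π' (σ q) (i q) (h q - 1) (c q) (b q)) → p ≤ k₁) ∧
      (∀ q, OccursIn π₂ (σ q) (h q) (j q) (a q) (c q - 1)) ∧
      (∀ (p : ℕ) (π' : Equiv.Perm (Fin p)), Separable π' →
        (∀ q, OccursIn π' (σ q) (h q) (j q) (a q) (c q - 1)) → p ≤ k₂) := by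
  simp only [OccursIn] at hocc
  choose f hm hv hidx hval using hocc
  have hkk : k₁ < k₁ + k₂ := by omega
  set K1 : Fin (k₁ + k₂) := ⟨k₁, hkk⟩ with hK1
  set L0 : Fin (k₁ + k₂) := ⟨(π₁.symm ⟨0, hk₁⟩ : ℕ), by have := (π₁.symm ⟨0, hk₁⟩).isLt; omega⟩
    with hL0
  have hL0lt : (L0 : ℕ) < k₁ := (π₁.symm ⟨0, hk₁⟩).isLt
  have hssumL0 : (ssum π₁ π₂ L0 : ℕ) = k₂ := by
    rw [ssum_val_left π₁ π₂ L0 hL0lt]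
    have h0 : (⟨(L0 : ℕ), hL0lt⟩ : Fin k₁) = π₁.symm ⟨0, hk₁⟩ := by ext; rfl
    rw [h0, Equiv.apply_symm_apply]
    simp
  have hmin : ∀ q (x : Fin (k₁ + k₂)), (x : ℕ) < k₁ →
      (σ q (f q L0) : ℕ) ≤ (σ q (f q x) : ℕ) := by
    intro q x hx
    by_contra hcon
    have hlt : σ q (f q x) < σ q (f q L0) := by rw [Fin.lt_def]; omega
    have h2 := (hv q x L0).mpr hlt
    rw [Fin.lt_def, hssumL0, ssum_val_left π₁ π₂ x hx] at h2
    omega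
  have hcross : ∀ q (x : Fin (k₁ + k₂)), k₁ ≤ (x : ℕ) →
      (σ q (f q x) : ℕ) < (σ q (f q L0) : ℕ) := by
    intro q x hx
    have hlt : ssum π₁ π₂ x < ssum π₁ π₂ L0 := by
      rw [Fin.lt_def, hssumL0, ssum_val_right π₁ π₂ x hx]
      exact (π₂ _).isLt
    have h2 := (hv q x L0).mp hlt
    rw [Fin.lt_def] at h2
    exact h2
  have hf0K1 : ∀ q, (f q ⟨0, by omega⟩ : ℕ) < (f q K1 : ℕ) := by
    intro q
    have h2 : f q ⟨0, by omega⟩ < f q K1 := hm q (Fin.mk_lt_mk.mpr hk₁)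
    rw [Fin.lt_def] at h2; exact h2
  have hbd : ∀ q, i q < (f q K1 : ℕ) + 1 ∧ (f q K1 : ℕ) + 1 ≤ j q ∧
      a q < (σ q (f q L0) : ℕ) + 1 ∧ (σ q (f q L0) : ℕ) + 1 ≤ b q := by
    intro q
    have h1 := hidx q ⟨0, by omega⟩
    have h2 := hidx q K1
    have h4 := hval q L0
    have h5 := hf0K1 q
    have h6 := hcross q K1 (le_refl k₁)
    have h3 := hval q K1
    exact ⟨by omega, h2.2, by omega, h4.2⟩
  have hocc₁ : ∀ q, OccursIn π₁ (σ q) (i q) ((f q K1 : ℕ) + 1 - 1)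
      ((σ q (f q L0) : ℕ) + 1) (b q) := by
    intro q
    refine ⟨fun ℓ => f q (Fin.castAdd k₂ ℓ), ?_, ?_, ?_, ?_⟩
    · intro x y hxy
      exact hm q (by rw [Fin.lt_def]; exact hxy)
    · intro ℓ m
      show π₁ ℓ < π₁ m ↔ σ q (f q (Fin.castAdd k₂ ℓ)) < σ q (f q (Fin.castAdd k₂ m))
      have hℓ : ((Fin.castAdd k₂ ℓ : Fin (k₁ + k₂)) : ℕ) < k₁ := ℓ.isLt
      have hm2 : ((Fin.castAdd k₂ m : Fin (k₁ + k₂)) : ℕ) < k₁ := m.isLt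
      have eℓ : (⟨((Fin.castAdd k₂ ℓ : Fin (k₁ + k₂)) : ℕ), hℓ⟩ : Fin k₁) = ℓ := rfl
      have em : (⟨((Fin.castAdd k₂ m : Fin (k₁ + k₂)) : ℕ), hm2⟩ : Fin k₁) = m := rfl
      rw [← hv q (Fin.castAdd k₂ ℓ) (Fin.castAdd k₂ m), Fin.lt_def, Fin.lt_def,
        ssum_val_left π₁ π₂ _ hℓ, ssum_val_left π₁ π₂ _ hm2, eℓ, em]
      omega
    · intro ℓ
      show i q ≤ (f q (Fin.castAdd k₂ ℓ) : ℕ) + 1 ∧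
        (f q (Fin.castAdd k₂ ℓ) : ℕ) + 1 ≤ (f q K1 : ℕ) + 1 - 1
      have h1 := hidx q (Fin.castAdd k₂ ℓ)
      have h2 : f q (Fin.castAdd k₂ ℓ) < f q K1 := hm q (by rw [Fin.lt_def]; exact ℓ.isLt)
      rw [Fin.lt_def] at h2
      exact ⟨h1.1, by omega⟩
    · intro ℓ
      show (σ q (f q L0) : ℕ) + 1 ≤ (σ q (f q (Fin.castAdd k₂ ℓ)) : ℕ) + 1 ∧
        (σ q (f q (Fin.castAdd k₂ ℓ)) : ℕ) + 1 ≤ b q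
      have h1 := hval q (Fin.castAdd k₂ ℓ)
      have h2 := hmin q (Fin.castAdd k₂ ℓ) ℓ.isLt
      exact ⟨by omega, h1.2⟩
  have hocc₂ : ∀ q, OccursIn π₂ (σ q) ((f q K1 : ℕ) + 1) (j q) (a q)
      ((σ q (f q L0) : ℕ) + 1 - 1) := by
    intro q
    refine ⟨fun ℓ => f q (Fin.natAdd k₁ ℓ), ?_, ?_, ?_, ?_⟩
    · intro x y hxy
      have hxy2 : (x : ℕ) < (y : ℕ) := hxy
      refine hm q ?_
      rw [Fin.lt_def]
      show k₁ + (x : ℕ) < k₁ + (y : ℕ)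
      omega
    · intro ℓ m
      show π₂ ℓ < π₂ m ↔ σ q (f q (Fin.natAdd k₁ ℓ)) < σ q (f q (Fin.natAdd k₁ m))
      have hℓ : k₁ ≤ ((Fin.natAdd k₁ ℓ : Fin (k₁ + k₂)) : ℕ) := Nat.le_add_right _ _
      have hm2 : k₁ ≤ ((Fin.natAdd k₁ m : Fin (k₁ + k₂)) : ℕ) := Nat.le_add_right _ _
      have eℓ : (⟨((Fin.natAdd k₁ ℓ : Fin (k₁ + k₂)) : ℕ) - k₁,
          by have := ℓ.isLt; omega⟩ : Fin k₂) = ℓ := by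
        ext; show k₁ + (ℓ : ℕ) - k₁ = (ℓ : ℕ); omega
      have em : (⟨((Fin.natAdd k₁ m : Fin (k₁ + k₂)) : ℕ) - k₁,
          by have := m.isLt; omega⟩ : Fin k₂) = m := by
        ext; show k₁ + (m : ℕ) - k₁ = (m : ℕ); omega
      rw [← hv q (Fin.natAdd k₁ ℓ) (Fin.natAdd k₁ m), Fin.lt_def, Fin.lt_def,
        ssum_val_right π₁ π₂ _ hℓ, ssum_val_right π₁ π₂ _ hm2, eℓ, em]
    · intro ℓ
      show (f q K1 : ℕ) + 1 ≤ (f q (Fin.natAdd k₁ ℓ) : ℕ) + 1 ∧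
        (f q (Fin.natAdd k₁ ℓ) : ℕ) + 1 ≤ j q
      have h1 := hidx q (Fin.natAdd k₁ ℓ)
      have h2 : f q K1 ≤ f q (Fin.natAdd k₁ ℓ) :=
        (hm q).monotone (by rw [Fin.le_def]; exact Nat.le_add_right _ _)
      rw [Fin.le_def] at h2
      exact ⟨by omega, h1.2⟩
    · intro ℓ
      show a q ≤ (σ q (f q (Fin.natAdd k₁ ℓ)) : ℕ) + 1 ∧
        (σ q (f q (Fin.natAdd k₁ ℓ)) : ℕ) + 1 ≤ (σ q (f q L0) : ℕ) + 1 - 1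
      have h1 := hval q (Fin.natAdd k₁ ℓ)
      have h2 := hcross q (Fin.natAdd k₁ ℓ) (Nat.le_add_right _ _)
      exact ⟨h1.1, by omega⟩
  refine ⟨fun q => (f q K1 : ℕ) + 1, fun q => (σ q (f q L0) : ℕ) + 1,
    fun q => ⟨(hbd q).1, (hbd q).2.1, (hbd q).2.2.1, (hbd q).2.2.2⟩, hocc₁, ?_, hocc₂, ?_⟩
  · intro p π' hsep' hocc'
    have h2 := hmax (p + k₂) (ssum π' π₂) (sep_ssum hsep' hs₂) (fun q =>
      occ_glue π' π₂ (σ q) (hij q).1 (hab q).1 (hbd q).1 (hbd q).2.2.1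
        (by have := hbd q; omega) (by have := hbd q; omega) (hocc' q) (hocc₂ q))
    omega
  · intro p π' hsep' hocc'
    have h2 := hmax (k₁ + p) (ssum π₁ π') (sep_ssum hs₁ hsep') (fun q =>
      occ_glue π₁ π' (σ q) (hij q).1 (hab q).1 (hbd q).1 (hbd q).2.2.1
        (by have := hbd q; omega) (by have := hbd q; omega) (hocc₁ q) (hocc' q))
    omega
end

section
/- Let c ≥ 1 be a real constant and let 0 < ε < 1/2. With k = k(n) = ⌈n^{1/2+ε}⌉, one has c^k · (n−k)! · (n choose k)² = o(n!) as n → ∞; in particular, there exists N such that for all n ≥ N, c^k · (n−k)! · (n choose k)² < n!. -/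
open Filter Real Asymptotics Topology

private lemma pow_div_three_le_factorial (k : ℕ) :
    ((k : ℝ) / 3) ^ k ≤ (Nat.factorial k : ℝ) := by
  induction k with
  | zero => simp
  | succ k ih =>
    have hstep : ((k : ℝ) + 1) ^ k ≤ 3 * (k : ℝ) ^ k := by
      rcases Nat.eq_zero_or_pos k with hk | hk
      · subst hk; norm_num
      · have hk0 : (0 : ℝ) < k := by exact_mod_cast hk
        have h3 : (1 + 1 / (k : ℝ)) ≤ Real.exp (1 / k) := by
          have := Real.add_one_le_exp (1 / (k : ℝ)); linarith
        have h2 : (1 + 1 / (k : ℝ)) ^ k ≤ Real.exp 1 := by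
          calc (1 + 1 / (k : ℝ)) ^ k ≤ (Real.exp (1 / k)) ^ k :=
                pow_le_pow_left₀ (by positivity) h3 k
            _ = Real.exp (k * (1 / k)) := by rw [← Real.exp_nat_mul]
            _ = Real.exp 1 := by rw [mul_one_div, div_self hk0.ne']
        have hexp3 : Real.exp 1 ≤ 3 := by
          have := Real.exp_one_lt_d9; linarith
        have h1 : ((k : ℝ) + 1) = k * (1 + 1 / k) := by field_simp
        calc ((k : ℝ) + 1) ^ k = (k : ℝ) ^ k * (1 + 1 / k) ^ k := by rw [h1, mul_pow]
          _ ≤ (k : ℝ) ^ k * 3 :=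
              mul_le_mul_of_nonneg_left (h2.trans hexp3) (by positivity)
          _ = 3 * (k : ℝ) ^ k := by ring
    push_cast
    calc (((k : ℝ) + 1) / 3) ^ (k + 1)
        = (((k : ℝ) + 1) ^ k / 3 ^ k) * (((k : ℝ) + 1) / 3) := by
          rw [pow_succ, div_pow]
      _ ≤ (3 * (k : ℝ) ^ k / 3 ^ k) * (((k : ℝ) + 1) / 3) := by gcongr
      _ = ((k : ℝ) + 1) * ((k : ℝ) / 3) ^ k := by rw [div_pow]; ring
      _ ≤ ((k : ℝ) + 1) * (Nat.factorial k : ℝ) := by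
          have : (0:ℝ) ≤ (k:ℝ) + 1 := by positivity
          exact mul_le_mul_of_nonneg_left ih this
      _ = ((Nat.factorial (k + 1) : ℕ) : ℝ) := by
          rw [Nat.factorial_succ]; push_cast; ring

open Filter in
/-- With `k = ⌈n^(1/2+ε)⌉`, one has `c^k (n-k)! (n choose k)² = o(n!)`; in particular this
quantity is eventually strictly less than `n!`. -/
theorem asymptotic_count (c : ℝ) (hc : 1 ≤ c) (ε : ℝ) (hε0 : 0 < ε) (hε : ε < 1 / 2) :
    ((fun n : ℕ => c ^ ⌈(n : ℝ) ^ ((1 : ℝ) / 2 + ε)⌉₊ *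
        (Nat.factorial (n - ⌈(n : ℝ) ^ ((1 : ℝ) / 2 + ε)⌉₊) : ℝ) *
        ((Nat.choose n ⌈(n : ℝ) ^ ((1 : ℝ) / 2 + ε)⌉₊ : ℕ) : ℝ) ^ 2)
      =o[atTop] fun n : ℕ => (Nat.factorial n : ℝ)) ∧
    ∃ N : ℕ, ∀ n ≥ N,
      c ^ ⌈(n : ℝ) ^ ((1 : ℝ) / 2 + ε)⌉₊ *
        (Nat.factorial (n - ⌈(n : ℝ) ^ ((1 : ℝ) / 2 + ε)⌉₊) : ℝ) *
        ((Nat.choose n ⌈(n : ℝ) ^ ((1 : ℝ) / 2 + ε)⌉₊ : ℕ) : ℝ) ^ 2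
        < (Nat.factorial n : ℝ) := by
  have hc0 : (0 : ℝ) < c := lt_of_lt_of_le one_pos hc
  set K : ℕ → ℕ := fun n => ⌈(n : ℝ) ^ ((1 : ℝ) / 2 + ε)⌉₊ with hKdef
  set Q : ℕ → ℝ := fun n => c ^ K n * (Nat.factorial (n - K n) : ℝ) *
      ((Nat.choose n (K n) : ℕ) : ℝ) ^ 2 with hQdef
  have hQnonneg : ∀ n, 0 ≤ Q n := fun n => by positivity
  have he1 : (0 : ℝ) < 1 / 2 + ε := by linarith
  have hle1 : (1 : ℝ) / 2 + ε ≤ 1 := by linarith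
  -- smallness of 9 c n^(-2ε)
  have htend0 : Tendsto (fun n : ℕ => 9 * c * (n : ℝ) ^ (-(2 * ε))) atTop (𝓝 0) := by
    have h := (tendsto_rpow_neg_atTop (by linarith : (0:ℝ) < 2 * ε)).comp
      tendsto_natCast_atTop_atTop (α := ℕ)
    have := h.const_mul (9 * c)
    simpa using this
  have hsmall : ∀ᶠ n : ℕ in atTop, 9 * c * (n : ℝ) ^ (-(2 * ε)) ≤ 1 / 2 :=
    htend0.eventually (eventually_le_nhds (by norm_num))
  -- the main pointwise bound
  have hmain : ∀ᶠ n : ℕ in atTop, Q n ≤ (1 / 2 : ℝ) ^ (K n) * (Nat.factorial n : ℝ) := by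
    filter_upwards [eventually_ge_atTop 1, hsmall] with n hn1 hns
    have hn0 : (0 : ℝ) < n := by exact_mod_cast hn1
    have hn1' : (1 : ℝ) ≤ n := by exact_mod_cast hn1
    have hk1 : 1 ≤ K n := by
      rw [hKdef]
      exact Nat.one_le_iff_ne_zero.mpr (Nat.ceil_pos.mpr (rpow_pos_of_pos hn0 _)).ne'
    have hk0 : (0 : ℝ) < K n := by exact_mod_cast hk1
    have hkn : K n ≤ n := by
      rw [hKdef]
      refine Nat.ceil_le.mpr ?_
      calc (n : ℝ) ^ ((1:ℝ)/2 + ε) ≤ (n : ℝ) ^ (1 : ℝ) :=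
            Real.rpow_le_rpow_of_exponent_le hn1' hle1
        _ = n := Real.rpow_one _
    have hKge : (n : ℝ) ^ ((1:ℝ)/2 + ε) ≤ (K n : ℝ) := Nat.le_ceil _
    have hk2 : (n : ℝ) ^ ((1:ℝ) + 2 * ε) ≤ (K n : ℝ) ^ 2 := by
      have hx0 : (0 : ℝ) ≤ (n : ℝ) ^ ((1:ℝ)/2 + ε) := (rpow_pos_of_pos hn0 _).le
      calc (n : ℝ) ^ ((1:ℝ) + 2 * ε)
          = (n : ℝ) ^ (((1:ℝ)/2 + ε) + ((1:ℝ)/2 + ε)) := by ring_nf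
        _ = (n : ℝ) ^ ((1:ℝ)/2 + ε) * (n : ℝ) ^ ((1:ℝ)/2 + ε) := Real.rpow_add hn0 _ _
        _ ≤ (K n : ℝ) * (K n : ℝ) := mul_le_mul hKge hKge hx0 hk0.le
        _ = (K n : ℝ) ^ 2 := (sq _).symm
    set k := K n
    have hB : (0 : ℝ) < (k : ℝ) ^ 2 / 9 := by positivity
    -- identity and descFactorial bound
    have hid : ((Nat.choose n k : ℝ)) * (Nat.factorial k : ℝ) * (Nat.factorial (n - k) : ℝ)
        = (Nat.factorial n : ℝ) := by
      exact_mod_cast congrArg (Nat.cast (R := ℝ)) (Nat.choose_mul_factorial_mul_factorial hkn)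
    have hck : (Nat.choose n k : ℝ) * (Nat.factorial k : ℝ) ≤ (n : ℝ) ^ k := by
      have h := Nat.descFactorial_le_pow n k
      rw [Nat.descFactorial_eq_factorial_mul_choose] at h
      have h' : ((Nat.factorial k * Nat.choose n k : ℕ) : ℝ) ≤ ((n ^ k : ℕ) : ℝ) := by
        exact_mod_cast h
      push_cast at h'
      linarith [h']
    have hfac : ((k : ℝ) ^ 2 / 9) ^ k ≤ ((Nat.factorial k : ℝ)) ^ 2 := by
      have h := pow_div_three_le_factorial k
      calc ((k : ℝ) ^ 2 / 9) ^ k = (((k : ℝ) / 3) ^ 2) ^ k := by ring_nf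
        _ = (((k : ℝ) / 3) ^ k) ^ 2 := by rw [← pow_mul, ← pow_mul, mul_comm]
        _ ≤ ((Nat.factorial k : ℝ)) ^ 2 := pow_le_pow_left₀ (by positivity) h 2
    -- key multiplicative bound
    have hQB : Q n * ((k : ℝ) ^ 2 / 9) ^ k ≤ (c * n) ^ k * (Nat.factorial n : ℝ) := by
      have step1 : Q n * ((k : ℝ) ^ 2 / 9) ^ k ≤ Q n * ((Nat.factorial k : ℝ)) ^ 2 :=
        mul_le_mul_of_nonneg_left hfac (hQnonneg n)
      have step2 : Q n * ((Nat.factorial k : ℝ)) ^ 2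
          = c ^ k * (Nat.factorial n : ℝ) * ((Nat.choose n k : ℝ) * (Nat.factorial k : ℝ)) := by
        rw [← hid]; simp only [hQdef]; ring
      have step3 : c ^ k * (Nat.factorial n : ℝ) * ((Nat.choose n k : ℝ) * (Nat.factorial k : ℝ))
          ≤ c ^ k * (Nat.factorial n : ℝ) * (n : ℝ) ^ k := by
        have : (0:ℝ) ≤ c ^ k * (Nat.factorial n : ℝ) := by positivity
        exact mul_le_mul_of_nonneg_left hck this
      calc Q n * ((k : ℝ) ^ 2 / 9) ^ k ≤ Q n * ((Nat.factorial k : ℝ)) ^ 2 := step1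
        _ = _ := step2
        _ ≤ c ^ k * (Nat.factorial n : ℝ) * (n : ℝ) ^ k := step3
        _ = (c * n) ^ k * (Nat.factorial n : ℝ) := by rw [mul_pow]; ring
    have hQle : Q n ≤ (c * n / ((k : ℝ) ^ 2 / 9)) ^ k * (Nat.factorial n : ℝ) := by
      rw [div_pow, div_mul_eq_mul_div, le_div_iff₀ (by positivity)]
      exact hQB
    have hratio : c * (n : ℝ) / ((k : ℝ) ^ 2 / 9) ≤ 1 / 2 := by
      have heq : c * (n : ℝ) / ((k : ℝ) ^ 2 / 9) = 9 * c * (n : ℝ) / (k : ℝ) ^ 2 := by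
        field_simp
      have hden : (0 : ℝ) < (n : ℝ) ^ ((1:ℝ) + 2 * ε) := rpow_pos_of_pos hn0 _
      have h1 : 9 * c * (n : ℝ) / (k : ℝ) ^ 2 ≤ 9 * c * (n : ℝ) / (n : ℝ) ^ ((1:ℝ) + 2 * ε) := by
        gcongr
      have h2 : 9 * c * (n : ℝ) / (n : ℝ) ^ ((1:ℝ) + 2 * ε) = 9 * c * (n : ℝ) ^ (-(2 * ε)) := by
        rw [mul_div_assoc]
        congr 1
        rw [div_eq_iff hden.ne', ← Real.rpow_add hn0]
        norm_num
      rw [heq]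
      calc 9 * c * (n : ℝ) / (k : ℝ) ^ 2 ≤ 9 * c * (n : ℝ) / (n : ℝ) ^ ((1:ℝ) + 2 * ε) := h1
        _ = 9 * c * (n : ℝ) ^ (-(2 * ε)) := h2
        _ ≤ 1 / 2 := hns
    calc Q n ≤ (c * n / ((k : ℝ) ^ 2 / 9)) ^ k * (Nat.factorial n : ℝ) := hQle
      _ ≤ (1 / 2 : ℝ) ^ k * (Nat.factorial n : ℝ) := by
          have hnn : (0:ℝ) ≤ c * n / ((k : ℝ) ^ 2 / 9) := by positivity
          exact mul_le_mul_of_nonneg_right (pow_le_pow_left₀ hnn hratio k)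
            (by positivity)
  -- K tends to atTop
  have hKtend : Tendsto K atTop atTop := by
    have h1 : Tendsto (fun n : ℕ => (n : ℝ) ^ ((1:ℝ)/2 + ε)) atTop atTop :=
      (tendsto_rpow_atTop he1).comp tendsto_natCast_atTop_atTop
    exact tendsto_nat_ceil_atTop.comp h1
  have hhalf : Tendsto (fun n => ((1:ℝ)/2) ^ (K n)) atTop (𝓝 0) :=
    (tendsto_pow_atTop_nhds_zero_of_lt_one (by norm_num) (by norm_num)).comp hKtend
  have hLO : (fun n : ℕ => Q n) =o[atTop] fun n : ℕ => (Nat.factorial n : ℝ) := by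
    rw [isLittleO_iff]
    intro δ hδ
    have hδ' : ∀ᶠ n : ℕ in atTop, ((1:ℝ)/2) ^ (K n) ≤ δ :=
      hhalf.eventually (eventually_le_nhds hδ)
    filter_upwards [hmain, hδ'] with n h1 h2
    rw [Real.norm_eq_abs, Real.norm_eq_abs, abs_of_nonneg (hQnonneg n),
      abs_of_nonneg (by positivity : (0:ℝ) ≤ (Nat.factorial n : ℝ))]
    calc Q n ≤ ((1:ℝ)/2) ^ (K n) * (Nat.factorial n : ℝ) := h1
      _ ≤ δ * (Nat.factorial n : ℝ) := mul_le_mul_of_nonneg_right h2 (by positivity)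
  refine ⟨hLO, ?_⟩
  have hev : ∀ᶠ n : ℕ in atTop, Q n < (Nat.factorial n : ℝ) := by
    filter_upwards [hmain, hKtend.eventually_ge_atTop 1] with n h1 h2
    have hfp : (0:ℝ) < (Nat.factorial n : ℝ) := by
      exact_mod_cast Nat.factorial_pos n
    have : ((1:ℝ)/2) ^ (K n) ≤ (1:ℝ)/2 := by
      calc ((1:ℝ)/2) ^ (K n) ≤ ((1:ℝ)/2) ^ 1 :=
        pow_le_pow_of_le_one (by norm_num) (by norm_num) h2
        _ = 1/2 := pow_one _
    have h3 : Q n ≤ (1/2) * (Nat.factorial n : ℝ) :=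
      h1.trans (mul_le_mul_of_nonneg_right this hfp.le)
    linarith
  obtain ⟨N, hN⟩ := eventually_atTop.mp hev
  exact ⟨N, hN⟩
end

section
/- Let C be a set of permutations closed under pattern containment with at most exponential growth (there is c ≥ 1 with at most c^k permutations of length k in C for every k). Then for every ε > 0 and all sufficiently large n there exists a permutation σ of length n such that: σ itself is a common pattern of the pair (σ, σ) of length n (so the longest common pattern of σ and σ has length exactly n), while every common pattern of (σ, σ) that belongs to C has length less than n^{1/2+ε}. In particular, computing a longest common pattern from the class C approximates the longest common pattern of two permutations within no better ratio than roughly the square root of the optimum. -/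
/-!
A permutation of length `n` containing a given pattern `π` of length `t` is determined by the
positions and the values of an occurrence (two `t`-subsets) together with a bijection between
their complements, so at most `|C ∩ S_t| · C(n,t)² · (n-t)!` permutations contain a pattern of
length `t` from `C`. Since `n! = C(n,t) · t! · (n-t)!`, `C(n,t) ≤ n^t / t!` and `t! ≥ (t/e)^t`,
this is less than `n!` once `t² > e² c n`, e.g. for `t = ⌈n^(1/2+ε)⌉` and `n` large. A
permutation avoiding all of them has, `C` being closed under patterns, no pattern in `C` of
length `≥ t`, while it is trivially a longest common pattern of itself with itself.
-/

open Finset Function Equiv Nat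

theorem Pattern.refl {n : ℕ} (σ : Perm (Fin n)) : Pattern σ σ :=
  ⟨id, strictMono_id, fun _ _ => Iff.rfl⟩

theorem Pattern.trans {k m n : ℕ} {π : Perm (Fin k)} {τ : Perm (Fin m)} {σ : Perm (Fin n)}
    (h₁ : Pattern π τ) (h₂ : Pattern τ σ) : Pattern π σ := by
  obtain ⟨g, hg, hπτ⟩ := h₁
  obtain ⟨f, hf, hτσ⟩ := h₂
  exact ⟨f ∘ g, hf.comp hg, fun ℓ m => (hπτ ℓ m).trans (hτσ (g ℓ) (g m))⟩

theorem Pattern.length_le {k n : ℕ} {π : Perm (Fin k)} {σ : Perm (Fin n)}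
    (h : Pattern π σ) : k ≤ n := by
  obtain ⟨f, hf, -⟩ := h
  simpa using Fintype.card_le_of_injective f hf.injective

theorem exists_perm_lt_iff_lt {α : Type*} [LinearOrder α] {t : ℕ} {g : Fin t → α}
    (hg : Injective g) : ∃ ρ : Perm (Fin t), ∀ ℓ m, ρ ℓ < ρ m ↔ g ℓ < g m := by
  have hsorted : StrictMono (g ∘ Tuple.sort g) :=
    (Tuple.monotone_sort g).strictMono_of_injective (hg.comp (Tuple.sort g).injective)
  refine ⟨(Tuple.sort g).symm, fun ℓ m => ?_⟩
  simpa using (hsorted.lt_iff_lt (a := (Tuple.sort g).symm ℓ) (b := (Tuple.sort g).symm m)).symm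

theorem exists_pattern_of_le {t m : ℕ} (τ : Perm (Fin m)) (h : t ≤ m) :
    ∃ ρ : Perm (Fin t), Pattern ρ τ := by
  obtain ⟨ρ, hρ⟩ := exists_perm_lt_iff_lt (τ.injective.comp (Fin.castLE_injective h))
  exact ⟨ρ, Fin.castLE h, Fin.strictMono_castLE h, hρ⟩

theorem Pattern.exists_orderEmbedding {k n : ℕ} {π : Perm (Fin k)} {σ : Perm (Fin n)}
    (h : Pattern π σ) : ∃ f g : Fin k ↪o Fin n, ∀ ℓ, σ (f ℓ) = g (π ℓ) := by
  obtain ⟨f, hf, hπσ⟩ := h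
  have hg : StrictMono (σ ∘ f ∘ π.symm) := fun a b hab =>
    (hπσ (π.symm a) (π.symm b)).1 (by simpa using hab)
  exact ⟨.ofStrictMono f hf, .ofStrictMono _ hg, fun ℓ => by simp⟩

theorem card_perm_extending_le {ι α : Type*} [Fintype ι] [Fintype α] [DecidableEq α]
    (e h : ι ↪ α) : #{σ : Perm α | ∀ i, σ (e i) = h i} ≤ (Fintype.card α - Fintype.card ι)! := by
  classical
  set A := (Set.range e)ᶜ
  set B := (Set.range h)ᶜ
  have hmaps (σ : {σ : Perm α // ∀ i, σ (e i) = h i}) (a : α) : a ∈ A ↔ σ.1 a ∈ B := by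
    refine not_congr ⟨?_, ?_⟩
    · rintro ⟨i, rfl⟩
      exact ⟨i, (σ.2 i).symm⟩
    · rintro ⟨i, hi⟩
      exact ⟨i, σ.1.injective (by rw [σ.2 i, hi])⟩
  let restrict (σ : {σ : Perm α // ∀ i, σ (e i) = h i}) : A ≃ B := σ.1.subtypeEquiv (hmaps σ)
  have hrestrict : Injective restrict := by
    intro σ τ hστ
    ext a
    by_cases ha : a ∈ A
    · simpa [restrict] using congrArg (fun r => (r ⟨a, ha⟩ : α)) hστ
    · obtain ⟨i, rfl⟩ := not_not.1 ha
      rw [σ.2 i, τ.2 i]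
  rw [← Fintype.card_subtype]
  rcases isEmpty_or_nonempty {σ : Perm α // ∀ i, σ (e i) = h i} with _ | hne
  · simp [Fintype.card_eq_zero]
  obtain ⟨σ₀⟩ := hne
  calc Fintype.card {σ : Perm α // ∀ i, σ (e i) = h i}
      ≤ Fintype.card (A ≃ B) := Fintype.card_le_of_injective _ hrestrict
    _ = (Fintype.card α - Fintype.card ι)! := by
      rw [Fintype.card_equiv (restrict σ₀), Fintype.card_compl_set,
        Set.card_range_of_injective e.injective]

theorem card_orderEmbedding_fin (t n : ℕ) : Fintype.card (Fin t ↪o Fin n) = n.choose t := by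
  rw [← Nat.card_eq_fintype_card, Nat.card_congr Set.powersetCard.ofFinEmbEquiv,
    Set.powersetCard.card, Nat.card_eq_fintype_card, Fintype.card_fin]

open Classical in
theorem card_perm_containing_pattern_le {t n : ℕ} (S : Finset (Perm (Fin t))) :
    #{σ : Perm (Fin n) | ∃ π ∈ S, Pattern π σ} ≤ #S * (n.choose t ^ 2 * (n - t)!) := by
  let occ (π : Perm (Fin t)) (fg : (Fin t ↪o Fin n) × (Fin t ↪o Fin n)) : Finset (Perm (Fin n)) :=
    {σ | ∀ ℓ, σ (fg.1 ℓ) = fg.2 (π ℓ)}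
  have hsub : ({σ | ∃ π ∈ S, Pattern π σ} : Finset (Perm (Fin n))) ⊆
      S.biUnion fun π => univ.biUnion (occ π) := by
    intro σ hσ
    obtain ⟨π, hπS, hπσ⟩ := (mem_filter.1 hσ).2
    obtain ⟨f, g, hfg⟩ := hπσ.exists_orderEmbedding
    exact mem_biUnion.2 ⟨π, hπS, mem_biUnion.2 ⟨(f, g), mem_univ _, by simpa [occ] using hfg⟩⟩
  have hocc (π) (fg) : #(occ π fg) ≤ (n - t)! := by
    simpa using card_perm_extending_le fg.1.toEmbedding (π.toEmbedding.trans fg.2.toEmbedding)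
  calc _ ≤ #(S.biUnion fun π => univ.biUnion (occ π)) := card_le_card hsub
    _ ≤ ∑ π ∈ S, ∑ fg, #(occ π fg) :=
      card_biUnion_le.trans (sum_le_sum fun π _ => card_biUnion_le)
    _ ≤ ∑ π ∈ S, ∑ fg : (Fin t ↪o Fin n) × (Fin t ↪o Fin n), (n - t)! :=
      sum_le_sum fun π _ => sum_le_sum fun fg _ => hocc π fg
    _ = #S * (n.choose t ^ 2 * (n - t)!) := by
      simp [Fintype.card_prod, card_orderEmbedding_fin, sq]

theorem exists_perm_avoiding {t n : ℕ} (S : Finset (Perm (Fin t)))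
    (hS : #S * (n.choose t ^ 2 * (n - t)!) < n !) : ∃ σ : Perm (Fin n), ∀ π ∈ S, ¬ Pattern π σ := by
  classical
  have hcard : #{σ : Perm (Fin n) | ∃ π ∈ S, Pattern π σ} < #(univ : Finset (Perm (Fin n))) := by
    simpa [Fintype.card_perm] using (card_perm_containing_pattern_le S).trans_lt hS
  obtain ⟨σ, -, hσ⟩ := exists_mem_notMem_of_card_lt_card hcard
  exact ⟨σ, by simpa using hσ⟩

theorem card_mul_choose_sq_mul_factorial_lt {s t n : ℕ} {c : ℝ} (hc : 0 ≤ c)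
    (hs : (s : ℝ) ≤ c ^ t) (ht : Real.exp 2 * c * n < t ^ 2) :
    s * (n.choose t ^ 2 * (n - t)!) < n ! := by
  rcases lt_or_ge n t with hnt | htn
  · simp [Nat.choose_eq_zero_of_lt hnt, factorial_pos]
  have ht0 : t ≠ 0 := by
    rintro rfl
    refine ht.not_ge ?_
    simp only [CharP.cast_eq_zero, ne_eq, OfNat.ofNat_ne_zero, not_false_eq_true, zero_pow]
    positivity
  have hexp : Real.exp 1 ^ 2 = Real.exp 2 := by rw [← Real.exp_nat_mul]; norm_num
  have hcn : c * n < (t / Real.exp 1) ^ 2 := by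
    rw [div_pow, hexp, lt_div_iff₀ (Real.exp_pos 2)]
    linarith
  have hfact : (t / Real.exp 1) ^ t ≤ t ! := by
    have := Real.pow_div_factorial_le_exp (t : ℝ) t.cast_nonneg t
    rw [div_pow, ← Real.exp_nat_mul, mul_one, div_le_iff₀ (Real.exp_pos _), mul_comm]
    exact (div_le_iff₀ (by positivity)).1 this
  have hkey : (s : ℝ) * n.choose t < t ! := by
    have hpos : (0 : ℝ) < t ! := by positivity
    calc (s : ℝ) * n.choose t ≤ c ^ t * (n ^ t / t !) :=
          mul_le_mul hs (choose_le_pow_div t n) (by positivity) (by positivity)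
      _ = (c * n) ^ t / t ! := by rw [mul_pow, mul_div_assoc]
      _ < ((t / Real.exp 1) ^ t) ^ 2 / t ! := by
          rw [← pow_mul, mul_comm t 2, pow_mul]
          gcongr
      _ ≤ (t ! : ℝ) ^ 2 / t ! := by gcongr
      _ = t ! := by rw [sq, mul_div_cancel_right₀ _ hpos.ne']
  have hkey' : s * n.choose t < t ! := by exact_mod_cast hkey
  calc s * (n.choose t ^ 2 * (n - t)!) = s * n.choose t * (n.choose t * (n - t)!) := by ring
    _ < t ! * (n.choose t * (n - t)!) :=
        Nat.mul_lt_mul_of_pos_right hkey' (by positivity [Nat.choose_pos htn])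
    _ = n ! := by rw [← Nat.choose_mul_factorial_mul_factorial htn]; ring

theorem exists_perm_forall_pattern_length_lt (C : ∀ {m : ℕ}, Perm (Fin m) → Prop)
    (hclosed : ∀ {m m' : ℕ} (π : Perm (Fin m)) (τ : Perm (Fin m')), C τ → Pattern π τ → C π)
    {c : ℝ} (hc : 0 ≤ c) {t n : ℕ} (hgrowth : (Nat.card {π : Perm (Fin t) // C π} : ℝ) ≤ c ^ t)
    (ht : Real.exp 2 * c * n < t ^ 2) :
    ∃ σ : Perm (Fin n), ∀ m (π : Perm (Fin m)), C π → Pattern π σ → m < t := by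
  classical
  rw [Nat.card_eq_fintype_card, Fintype.card_subtype] at hgrowth
  obtain ⟨σ, hσ⟩ := exists_perm_avoiding _ (card_mul_choose_sq_mul_factorial_lt hc hgrowth ht)
  refine ⟨σ, fun m π hC hπσ => not_le.1 fun htm => ?_⟩
  obtain ⟨ρ, hρπ⟩ := exists_pattern_of_le π htm
  exact hσ ρ (by simpa using hclosed ρ π hC hρπ) (hρπ.trans hπσ)

theorem eventually_mul_lt_ceil_rpow_sq (a : ℝ) {ε : ℝ} (hε : 0 < ε) :
    ∀ᶠ n : ℕ in Filter.atTop, a * n < (⌈(n : ℝ) ^ (1 / 2 + ε)⌉₊ : ℝ) ^ 2 := by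
  have hlim : Filter.Tendsto (fun n : ℕ => (n : ℝ) ^ (2 * ε)) Filter.atTop Filter.atTop :=
    (tendsto_rpow_atTop (by linarith)).comp tendsto_natCast_atTop_atTop
  filter_upwards [hlim.eventually_gt_atTop a, Filter.eventually_ge_atTop 1] with n ha hn
  have hn0 : (0 : ℝ) < n := by exact_mod_cast hn
  calc a * n < (n : ℝ) ^ (2 * ε) * n := mul_lt_mul_of_pos_right ha hn0
    _ = ((n : ℝ) ^ (1 / 2 + ε)) ^ 2 := by
        rw [← Real.rpow_add_one hn0.ne', ← Real.rpow_mul_natCast hn0.le]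
        ring_nf
    _ ≤ (⌈(n : ℝ) ^ (1 / 2 + ε)⌉₊ : ℝ) ^ 2 := by gcongr; exact Nat.le_ceil _

/-- Inapproximability: for a class `C` closed under pattern containment with at most
exponential growth, for every `ε > 0` and all sufficiently large `n` there is a permutation
`σ` of length `n` which is a common pattern of the pair `(σ, σ)` of (maximal) length `n`,
while every common pattern of `(σ, σ)` belonging to `C` has length less than `n^(1/2+ε)`. -/
theorem longest_common_C_pattern_inapprox
    (C : ∀ {m : ℕ}, Equiv.Perm (Fin m) → Prop)
    (hclosed : ∀ {m m' : ℕ} (π : Equiv.Perm (Fin m)) (τ : Equiv.Perm (Fin m')),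
      C τ → Pattern π τ → C π)
    (c : ℝ) (hc : 1 ≤ c)
    (hgrowth : ∀ m : ℕ, (Nat.card {π : Equiv.Perm (Fin m) // C π} : ℝ) ≤ c ^ m) :
    ∀ ε : ℝ, 0 < ε → ∃ N : ℕ, ∀ n ≥ N, ∃ σ : Equiv.Perm (Fin n),
      (Pattern σ σ ∧ Pattern σ σ) ∧
      (∀ (m : ℕ) (π : Equiv.Perm (Fin m)), Pattern π σ ∧ Pattern π σ → m ≤ n) ∧
      (∀ (m : ℕ) (π : Equiv.Perm (Fin m)), C π → Pattern π σ ∧ Pattern π σ →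
        (m : ℝ) < (n : ℝ) ^ ((1 : ℝ) / 2 + ε)) := by
  intro ε hε
  obtain ⟨N, hN⟩ := Filter.eventually_atTop.1 (eventually_mul_lt_ceil_rpow_sq (Real.exp 2 * c) hε)
  refine ⟨N, fun n hn => ?_⟩
  obtain ⟨σ, hσ⟩ :=
    exists_perm_forall_pattern_length_lt C hclosed (by linarith) (hgrowth _) (hN n hn)
  exact ⟨σ, ⟨.refl σ, .refl σ⟩, fun m π h => h.1.length_le,
    fun m π hC h => Nat.lt_ceil.1 (hσ m π hC h.1)⟩
end
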